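/- arXiv:2404.11028 — 2 statements merged into one kernel-verified Lean document; each statement's English description precedes it below -/
import Mathlib

section
/- Let n ≥ 5. Every triangulation T of the n-gon satisfies TCL(T) ≤ (n² − 9)/4 if n is odd, and TCL(T) ≤ (n² − 8)/4 if n is even (equivalently, 4·TCL(T) ≤ n² − 9 for n odd and 4·TCL(T) ≤ n² − 8 for n even). -/
open scoped Classical

/-- The cyclic distance between two vertices of the `n`-gon labeled by `ZMod n`:
`min (k, n - k)` where `k` is the representative of `b - a`. -/
def cycDist {n : ℕ} (a b : ZMod n) : ℕ := min (b - a).val (a - b).val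

/-- The length of an unordered pair of vertices (in particular, of a chord). -/
def chordLen {n : ℕ} (p : Sym2 (ZMod n)) : ℕ :=
  Sym2.lift ⟨fun a b => cycDist a b, fun _ _ => min_comm _ _⟩ p

/-- `x` lies strictly inside the clockwise arc from `a` to `b`. -/
def InArc {n : ℕ} (a b x : ZMod n) : Prop :=
  0 < (x - a).val ∧ (x - a).val < (b - a).val

/-- Two chords cross: their four endpoints are distinct and exactly one endpoint of the
second chord lies strictly inside the clockwise arc from `a` to `b`. -/
def Crosses {n : ℕ} (p q : Sym2 (ZMod n)) : Prop :=
  ∃ a b c d : ZMod n, p = s(a, b) ∧ q = s(c, d) ∧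
    a ≠ b ∧ a ≠ c ∧ a ≠ d ∧ b ≠ c ∧ b ≠ d ∧ c ≠ d ∧
    Xor' (InArc a b c) (InArc a b d)

/-- A triangulation of the `n`-gon: a set of `n - 3` pairwise non-crossing chords
(each chord having length at least 2). -/
def IsTriangulation (n : ℕ) (T : Finset (Sym2 (ZMod n))) : Prop :=
  T.card = n - 3 ∧ (∀ p ∈ T, 2 ≤ chordLen p) ∧
    ∀ p ∈ T, ∀ q ∈ T, p ≠ q → ¬ Crosses p q

/-- The total chord length of a triangulation. -/
def TCL (n : ℕ) (T : Finset (Sym2 (ZMod n))) : ℕ := ∑ p ∈ T, chordLen p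

/-- A diameter is a chord of length `n / 2` (only possible for `n` even). -/
def IsDiameter {n : ℕ} (p : Sym2 (ZMod n)) : Prop := 2 * chordLen p = n

/-- The chord `p` layers the boundary edge `{i, i + 1}`: the edge lies on the (strictly)
shorter of the two arcs between the endpoints of `p`.  (Diameters never layer an edge.) -/
def LayersEdge {n : ℕ} (p : Sym2 (ZMod n)) (i : ZMod n) : Prop :=
  ∃ a b : ZMod n, p = s(a, b) ∧ (b - a).val < (a - b).val ∧ (i - a).val < (b - a).val

/-- The doubled layer number of the boundary edge `{i, i + 1}`:
twice the number of non-diameter chords layering it, plus the number of diameters. -/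
noncomputable def mT (n : ℕ) (T : Finset (Sym2 (ZMod n))) (i : ZMod n) : ℕ :=
  2 * (T.filter (fun p => LayersEdge p i ∧ ¬ IsDiameter p)).card +
    (T.filter (fun p => IsDiameter p)).card

/-- Subdivision of a triangulation of the `n`-gon at the boundary edge `{n-1, 0}`:
re-embed all chords (via representatives in `{0, …, n-1}`) into the `(n+1)`-gon, whose new
vertex `n` lies between `n - 1` and `0`, and add the chord `{n - 1, 0}`. -/
def subdiv (n : ℕ) (T : Finset (Sym2 (ZMod n))) : Finset (Sym2 (ZMod (n + 1))) :=
  T.image (Sym2.map (fun a : ZMod n => ((a.val : ℕ) : ZMod (n + 1)))) ∪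
    {s(((n - 1 : ℕ) : ZMod (n + 1)), (0 : ZMod (n + 1)))}

/-- Doubling construction: subdivide every boundary edge of the `m`-gon (old vertex `a`
becomes `2a` in the `2m`-gon) and add the chord `{2a, 2a+2}` over each new vertex. -/
def doubleTri (m : ℕ) (T : Finset (Sym2 (ZMod m))) : Finset (Sym2 (ZMod (2 * m))) :=
  T.image (Sym2.map (fun a : ZMod m => ((2 * a.val : ℕ) : ZMod (2 * m)))) ∪
    (Finset.range m).image
      (fun a : ℕ => s(((2 * a : ℕ) : ZMod (2 * m)), ((2 * a + 2 : ℕ) : ZMod (2 * m))))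

/-!
Counting each chord of length `d` once at every level `l = 1, …, d` gives
`TCL(T) = ∑ₗ #{p ∈ T | l ≤ chordLen p}`. For `l ≥ 2`, the shorter sides of the chords of length
`≥ l`, as sets of boundary edges, form a laminar family because the chords do not cross, and no
two of them are complementary. Every side lies inside the side `X₀` of a longest chord, of length
`M`, or inside the complement of `X₀`. A laminar family of sets of size `≥ l` inside `S` has at
most `|S| - l` members besides `S`, so there are at most `(M - l + 1) + (n - M - l) = n + 1 - 2l`
chords of length `≥ l`. Summing over `2 ≤ l ≤ n / 2`, with `#T = n - 3` at level `1`, gives the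
bound.
-/

open Finset

namespace ZMod
variable {n : ℕ} [NeZero n]

theorem val_sub_eq_ite (a b : ZMod n) :
    (a - b).val = if b.val ≤ a.val then a.val - b.val else a.val + n - b.val := by
  split_ifs with h
  · exact val_sub h
  · have hba : b - a ≠ 0 := sub_ne_zero.mpr fun hba => h (hba ▸ le_rfl)
    rw [← neg_sub, neg_val, if_neg hba, val_sub (by omega)]
    have := val_lt a
    omega

theorem val_sub_add_val_sub {a b : ZMod n} (h : a ≠ b) : (b - a).val + (a - b).val = n := by
  rw [val_sub_eq_ite, val_sub_eq_ite]
  have := val_lt a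
  have := val_lt b
  have : a.val ≠ b.val := fun h' => h (val_injective n h')
  split_ifs <;> omega

end ZMod

section Laminar
variable {α : Type*}

def IsLaminar (𝒜 : Finset (Finset α)) : Prop :=
  ∀ X ∈ 𝒜, ∀ Y ∈ 𝒜, X ⊆ Y ∨ Y ⊆ X ∨ Disjoint X Y

theorem IsLaminar.subset {𝒜 ℬ : Finset (Finset α)} (h𝒜 : IsLaminar 𝒜) (h : ℬ ⊆ 𝒜) :
    IsLaminar ℬ :=
  fun X hX Y hY => h𝒜 X (h hX) Y (h hY)

theorem IsLaminar.disjoint_of_not_subset {𝒜 : Finset (Finset α)} {X Y : Finset α}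
    (h𝒜 : IsLaminar 𝒜) (hX : X ∈ 𝒜) (hY : Y ∈ 𝒜) (hcard : #X ≤ #Y) (hXY : ¬ X ⊆ Y) :
    Disjoint X Y := by
  rcases h𝒜 X hX Y hY with h | h | h
  · exact absurd h hXY
  · exact absurd (eq_of_subset_of_card_le h hcard).ge hXY
  · exact h

theorem IsLaminar.card_erase_le [DecidableEq α] {l : ℕ} (hl : 2 ≤ l) (S : Finset α)
    {𝒜 : Finset (Finset α)} (h𝒜 : IsLaminar 𝒜) (hS : ∀ X ∈ 𝒜, X ⊆ S) (hcard : ∀ X ∈ 𝒜, l ≤ #X) :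
    #(𝒜.erase S) ≤ #S - l := by
  induction S using Finset.strongInduction generalizing 𝒜 with
  | H S ih =>
    set 𝒜' := 𝒜.erase S
    rcases 𝒜'.eq_empty_or_nonempty with h | hne
    · simp [h]
    obtain ⟨X₀, hX₀, hmax⟩ := 𝒜'.exists_max_image card hne
    have hX₀𝒜 : X₀ ∈ 𝒜 := mem_of_mem_erase hX₀
    have hX₀S : X₀ ⊂ S := ssubset_of_subset_of_ne (hS X₀ hX₀𝒜) (ne_of_mem_erase hX₀)
    have hl₀ := hcard X₀ hX₀𝒜
    set inner := 𝒜'.filter (· ⊆ X₀)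
    set outer := 𝒜'.filter (¬ · ⊆ X₀)
    have hinner : #(inner.erase X₀) ≤ #X₀ - l :=
      ih X₀ hX₀S ((h𝒜.subset (erase_subset _ _)).subset (filter_subset _ _))
        (fun X hX => (mem_filter.mp hX).2)
        (fun X hX => hcard X (mem_of_mem_erase (mem_filter.mp hX).1))
    have houter_sub : ∀ X ∈ outer, X ⊆ S \ X₀ := by
      intro X hX
      obtain ⟨hX', hXX₀⟩ := mem_filter.mp hX
      exact subset_sdiff.mpr ⟨hS X (mem_of_mem_erase hX'), h𝒜.disjoint_of_not_subset
        (mem_of_mem_erase hX') hX₀𝒜 (hmax X hX') hXX₀⟩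
    have houter : #(outer.erase (S \ X₀)) ≤ #(S \ X₀) - l := by
      refine ih (S \ X₀) (sdiff_ssubset hX₀S.subset ?_)
        ((h𝒜.subset (erase_subset _ _)).subset (filter_subset _ _)) houter_sub
        (fun X hX => hcard X (mem_of_mem_erase (mem_filter.mp hX).1))
      exact card_pos.mp (by omega)
    have houter_empty : #outer = 0 ∨ l ≤ #(S \ X₀) := by
      rcases outer.eq_empty_or_nonempty with h | ⟨X, hX⟩
      · simp [h]
      · exact .inr ((hcard X (mem_of_mem_erase (mem_filter.mp hX).1)).trans
          (card_le_card (houter_sub X hX)))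
    have hsplit : #inner + #outer = #𝒜' := card_filter_add_card_filter_not _
    have := pred_card_le_card_erase (s := inner) (a := X₀)
    have := pred_card_le_card_erase (s := outer) (a := S \ X₀)
    have := card_lt_card hX₀S
    rw [card_sdiff_of_subset hX₀S.subset] at houter houter_empty
    omega

theorem IsLaminar.card_le_card_add_one_sub_two_mul [Fintype α] [DecidableEq α] {l : ℕ}
    (hl : 2 ≤ l) {𝒜 : Finset (Finset α)} (h𝒜 : IsLaminar 𝒜)
    (hsize : ∀ X ∈ 𝒜, l ≤ #X ∧ 2 * #X ≤ Fintype.card α) (hcompl : ∀ X ∈ 𝒜, Xᶜ ∉ 𝒜) :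
    #𝒜 ≤ Fintype.card α + 1 - 2 * l := by
  rcases 𝒜.eq_empty_or_nonempty with h | hne
  · simp [h]
  obtain ⟨X₀, hX₀, hmax⟩ := 𝒜.exists_max_image card hne
  set inner := 𝒜.filter (· ⊆ X₀)
  set outer := 𝒜.filter (¬ · ⊆ X₀)
  have hinner : #(inner.erase X₀) ≤ #X₀ - l :=
    (h𝒜.subset (filter_subset _ _)).card_erase_le hl X₀ (fun X hX => (mem_filter.mp hX).2)
      (fun X hX => (hsize X (mem_filter.mp hX).1).1)
  have houter : #(outer.erase X₀ᶜ) ≤ #X₀ᶜ - l :=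
    (h𝒜.subset (filter_subset _ _)).card_erase_le hl X₀ᶜ
      (fun X hX => subset_compl_iff_disjoint_right.mpr (h𝒜.disjoint_of_not_subset
        (mem_filter.mp hX).1 hX₀ (hmax X (mem_filter.mp hX).1) (mem_filter.mp hX).2))
      (fun X hX => (hsize X (mem_filter.mp hX).1).1)
  have hX₀c : X₀ᶜ ∉ outer := fun h => hcompl X₀ hX₀ (mem_filter.mp h).1
  rw [erase_eq_of_notMem hX₀c, card_compl] at houter
  have hsplit : #inner + #outer = #𝒜 := card_filter_add_card_filter_not _
  have := pred_card_le_card_erase (s := inner) (a := X₀)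
  have := hsize X₀ hX₀
  omega

end Laminar

theorem exists_mk_eq_val_sub_eq_chordLen {n : ℕ} (p : Sym2 (ZMod n)) :
    ∃ e : ZMod n × ZMod n, s(e.1, e.2) = p ∧ (e.2 - e.1).val = chordLen p := by
  induction p using Sym2.ind with
  | _ a b =>
    rcases le_total (b - a).val (a - b).val with h | h
    · exact ⟨(a, b), rfl, (min_eq_left h).symm⟩
    · exact ⟨(b, a), Sym2.eq_swap, (min_eq_right h).symm⟩

section Arcs
variable {n : ℕ} [NeZero n]

/-- `i ∈ arcEdges a b` stands for the boundary edge `{i, i + 1}` on the clockwise arc from `a`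
to `b`. -/
def arcEdges (a b : ZMod n) : Finset (ZMod n) := {i | (i - a).val < (b - a).val}

@[simp]
theorem mem_arcEdges {a b i : ZMod n} : i ∈ arcEdges a b ↔ (i - a).val < (b - a).val := by
  simp [arcEdges]

theorem card_arcEdges (a b : ZMod n) : #(arcEdges a b) = (b - a).val := by
  have hlt := ZMod.val_lt (b - a)
  have harc : arcEdges a b = (range (b - a).val).image (fun j : ℕ => a + j) := by
    ext i
    simp only [mem_arcEdges, mem_image, mem_range]
    constructor
    · intro hi
      exact ⟨_, hi, by simp⟩
    · rintro ⟨j, hj, rfl⟩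
      rwa [add_sub_cancel_left, ZMod.val_cast_of_lt (hj.trans hlt)]
  rw [harc, card_image_of_injOn, card_range]
  intro i hi j hj hij
  simp only [coe_range, Set.mem_Iio] at hi hj
  have := congrArg ZMod.val (add_left_cancel hij)
  rwa [ZMod.val_cast_of_lt (hi.trans hlt), ZMod.val_cast_of_lt (hj.trans hlt)] at this

theorem compl_arcEdges {a b : ZMod n} (h : a ≠ b) : (arcEdges a b)ᶜ = arcEdges b a := by
  ext i
  have hib : i - b = (i - a) - (b - a) := by ring
  have := ZMod.val_sub_add_val_sub h
  have := ZMod.val_lt (i - a)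
  rw [mem_compl, mem_arcEdges, mem_arcEdges, hib, ZMod.val_sub_eq_ite (i - a)]
  split_ifs <;> omega

theorem arcEdges_injective {a b c d : ZMod n} (h : arcEdges a b = arcEdges c d)
    (hpos : 0 < (b - a).val) (hshort : 2 * (b - a).val ≤ n) : a = c ∧ b = d := by
  have hcard : (b - a).val = (d - c).val := by rw [← card_arcEdges, h, card_arcEdges]
  have hac : a = c := by
    by_contra hac
    have hc : c ∈ arcEdges a b := h ▸ by simpa [← hcard] using hpos
    have ha : a ∈ arcEdges c d := h ▸ by simpa using hpos
    have := ZMod.val_sub_add_val_sub hac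
    simp only [mem_arcEdges] at hc ha
    omega
  subst hac
  exact ⟨rfl, sub_left_injective (ZMod.val_injective n hcard)⟩

theorem arcEdges_laminar {a b c d : ZMod n} (hk : 0 < (b - a).val) (hk' : 2 * (b - a).val ≤ n)
    (hm : 0 < (d - c).val) (hm' : 2 * (d - c).val ≤ n) (hcr : ¬ Crosses s(a, b) s(c, d)) :
    arcEdges a b ⊆ arcEdges c d ∨ arcEdges c d ⊆ arcEdges a b ∨
      Disjoint (arcEdges a b) (arcEdges c d) := by
  have hpos : ∀ x y : ZMod n, x = y ↔ (x - a).val = (y - a).val := fun x y => by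
    rw [(ZMod.val_injective n).eq_iff, sub_left_inj]
  have hrel : ∀ x y : ZMod n, (x - y).val = if (y - a).val ≤ (x - a).val
      then (x - a).val - (y - a).val else (x - a).val + n - (y - a).val := fun x y => by
    rw [← sub_sub_sub_cancel_right x y a, ZMod.val_sub_eq_ite]
  have hlen := hrel d c
  set k := (b - a).val
  set s := (c - a).val
  set t := (d - a).val
  have hcross : ¬ (s ≠ 0 ∧ t ≠ 0 ∧ s ≠ k ∧ t ≠ k ∧ s ≠ t ∧
      ((0 < s ∧ s < k) ∧ ¬ (0 < t ∧ t < k) ∨ (0 < t ∧ t < k) ∧ ¬ (0 < s ∧ s < k))) := by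
    rintro ⟨hc, hd, hbc, hbd, hcd, hx⟩
    refine hcr ⟨a, b, c, d, rfl, rfl, ?_, ?_, ?_, ?_, ?_, ?_, hx⟩ <;>
      simp only [Ne, hpos, sub_self, ZMod.val_zero] <;> omega
  have hmem : ∀ i, i ∈ arcEdges c d ↔
      (if s ≤ (i - a).val then (i - a).val - s else (i - a).val + n - s) < (d - c).val := by
    intro i; rw [mem_arcEdges, hrel i c]
  have := ZMod.val_lt (c - a)
  have := ZMod.val_lt (d - a)
  -- Non-crossing and the shortness of both arcs leave only these three configurations.
  by_cases hsup : (s = 0 ∨ t < s) ∧ k ≤ t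
  · left
    intro i hi
    rw [mem_arcEdges] at hi
    rw [hmem]
    have := ZMod.val_lt (i - a)
    split_ifs at hlen ⊢ <;> omega
  by_cases hsub : s ≤ t ∧ t ≤ k
  · right; left
    intro i hi
    rw [hmem] at hi
    rw [mem_arcEdges]
    split_ifs at hi hlen <;> omega
  right; right
  rw [disjoint_left]
  intro i hi hi'
  rw [mem_arcEdges] at hi
  rw [hmem] at hi'
  have := ZMod.val_lt (i - a)
  split_ifs at hi' hlen <;> omega

theorem two_mul_chordLen_le (p : Sym2 (ZMod n)) : 2 * chordLen p ≤ n := by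
  induction p using Sym2.ind with
  | _ a b =>
    rcases eq_or_ne a b with rfl | h
    · simp [chordLen, cycDist]
    · have := ZMod.val_sub_add_val_sub h
      simp only [chordLen, cycDist, Sym2.lift_mk]
      omega

/-- The boundary edges on a shorter side of `p` (either side, for a diameter). -/
noncomputable def shortArc (p : Sym2 (ZMod n)) : Finset (ZMod n) :=
  arcEdges (exists_mk_eq_val_sub_eq_chordLen p).choose.1
    (exists_mk_eq_val_sub_eq_chordLen p).choose.2

theorem exists_shortArc_eq (p : Sym2 (ZMod n)) :
    ∃ a b, p = s(a, b) ∧ (b - a).val = chordLen p ∧ shortArc p = arcEdges a b := by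
  obtain ⟨hp, hlen⟩ := (exists_mk_eq_val_sub_eq_chordLen p).choose_spec
  exact ⟨_, _, hp.symm, hlen, rfl⟩

theorem card_shortArc (p : Sym2 (ZMod n)) : #(shortArc p) = chordLen p := by
  obtain ⟨a, b, -, hab, hp⟩ := exists_shortArc_eq p
  rw [hp, card_arcEdges, hab]

theorem shortArc_injOn : Set.InjOn (shortArc (n := n)) {p | 0 < chordLen p} := by
  intro p hp q _ h
  obtain ⟨a, b, rfl, hab, hp'⟩ := exists_shortArc_eq p
  obtain ⟨c, d, rfl, -, hq'⟩ := exists_shortArc_eq q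
  rw [hp', hq'] at h
  obtain ⟨rfl, rfl⟩ := arcEdges_injective h (hab ▸ hp) (hab ▸ two_mul_chordLen_le _)
  rfl

theorem shortArc_ne_compl {p q : Sym2 (ZMod n)} (hp : 0 < chordLen p) (hq : 0 < chordLen q) :
    shortArc q ≠ (shortArc p)ᶜ := by
  obtain ⟨a, b, rfl, hab, hp'⟩ := exists_shortArc_eq p
  obtain ⟨c, d, rfl, hcd, hq'⟩ := exists_shortArc_eq q
  have ha : a ∈ arcEdges a b := by
    rw [mem_arcEdges, sub_self, ZMod.val_zero]
    exact hab ▸ hp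
  have hne : a ≠ b := by
    rintro rfl
    simp at ha
  intro h
  rw [hp', hq', compl_arcEdges hne] at h
  -- Complementary sides can only come from the same chord.
  obtain ⟨rfl, rfl⟩ := arcEdges_injective h (hcd ▸ hq) (hcd ▸ two_mul_chordLen_le _)
  rw [Sym2.eq_swap, hp', ← compl_arcEdges hne] at hq'
  exact mem_compl.mp (hq' ▸ ha) ha

theorem isLaminar_image_shortArc {F : Finset (Sym2 (ZMod n))} (hpos : ∀ p ∈ F, 0 < chordLen p)
    (hF : ∀ p ∈ F, ∀ q ∈ F, p ≠ q → ¬ Crosses p q) : IsLaminar (F.image shortArc) := by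
  simp only [IsLaminar, mem_image]
  rintro _ ⟨p, hp, rfl⟩ _ ⟨q, hq, rfl⟩
  rcases eq_or_ne p q with rfl | hpq
  · exact .inl subset_rfl
  obtain ⟨a, b, rfl, hab, hp'⟩ := exists_shortArc_eq p
  obtain ⟨c, d, rfl, hcd, hq'⟩ := exists_shortArc_eq q
  rw [hp', hq']
  exact arcEdges_laminar (hab ▸ hpos _ hp) (hab ▸ two_mul_chordLen_le _) (hcd ▸ hpos _ hq)
    (hcd ▸ two_mul_chordLen_le _) (hF _ hp _ hq hpq)

end Arcs

theorem card_filter_le_chordLen_le {n l : ℕ} [NeZero n] (hl : 2 ≤ l)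
    {T : Finset (Sym2 (ZMod n))} (hT : ∀ p ∈ T, ∀ q ∈ T, p ≠ q → ¬ Crosses p q) :
    #{p ∈ T | l ≤ chordLen p} ≤ n + 1 - 2 * l := by
  set F := {p ∈ T | l ≤ chordLen p}
  have hpos : ∀ p ∈ F, 0 < chordLen p := fun p hp => by
    have := (mem_filter.mp hp).2
    omega
  have hF : ∀ p ∈ F, ∀ q ∈ F, p ≠ q → ¬ Crosses p q :=
    fun p hp q hq => hT p (mem_filter.mp hp).1 q (mem_filter.mp hq).1
  have hsize : ∀ X ∈ F.image shortArc, l ≤ #X ∧ 2 * #X ≤ Fintype.card (ZMod n) := by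
    simp only [mem_image]
    rintro _ ⟨p, hp, rfl⟩
    rw [card_shortArc, ZMod.card]
    exact ⟨(mem_filter.mp hp).2, two_mul_chordLen_le p⟩
  have hcompl : ∀ X ∈ F.image shortArc, Xᶜ ∉ F.image shortArc := by
    simp only [mem_image]
    rintro _ ⟨p, hp, rfl⟩ ⟨q, hq, hqp⟩
    exact shortArc_ne_compl (hpos p hp) (hpos q hq) hqp
  have h := (isLaminar_image_shortArc hpos hF).card_le_card_add_one_sub_two_mul hl hsize hcompl
  rwa [card_image_of_injOn (shortArc_injOn.mono hpos), ZMod.card] at h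

theorem sum_eq_sum_card_filter_le {ι : Type*} (s : Finset ι) (f : ι → ℕ) {N : ℕ}
    (hf : ∀ i ∈ s, f i ≤ N) : ∑ i ∈ s, f i = ∑ l ∈ Icc 1 N, #{i ∈ s | l ≤ f i} := by
  calc ∑ i ∈ s, f i = ∑ i ∈ s, #((Icc 1 N).bipartiteAbove (fun i l => l ≤ f i) i) := by
        refine sum_congr rfl fun i hi => ?_
        have : (Icc 1 N).bipartiteAbove (fun i l => l ≤ f i) i = Icc 1 (f i) := by
          ext l
          simp only [bipartiteAbove, mem_filter, mem_Icc]
          have := hf i hi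
          omega
        rw [this, Nat.card_Icc, Nat.add_sub_cancel]
    _ = _ := sum_card_bipartiteAbove_eq_sum_card_bipartiteBelow _

/-- The sum is `(h - 1) * (n - 1 - h)`, stated additively to avoid truncated subtraction. -/
theorem sum_Ioc_one_sub_two_mul (n : ℕ) {h : ℕ} (h₁ : 1 ≤ h) (hn : 2 * h ≤ n) :
    ∑ l ∈ Ioc 1 h, (n + 1 - 2 * l) + h * h + n = h * n + 1 := by
  induction h, h₁ using Nat.le_induction with
  | base => simp [add_comm]
  | succ h h₁ ih =>
    rw [sum_Ioc_succ_top h₁]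
    have := ih (by omega)
    have : (h + 1) * (h + 1) = h * h + 2 * h + 1 := by ring
    have : (h + 1) * n = h * n + n := by ring
    omega

theorem TCL_le {n : ℕ} (hn : 2 ≤ n) {T : Finset (Sym2 (ZMod n))} (hT : IsTriangulation n T) :
    TCL n T ≤ (n - 3) + ∑ l ∈ Ioc 1 (n / 2), (n + 1 - 2 * l) := by
  have : NeZero n := ⟨by omega⟩
  obtain ⟨hcard, -, hcross⟩ := hT
  have hle : ∀ p ∈ T, chordLen p ≤ n / 2 := fun p _ => by
    have := two_mul_chordLen_le p
    omega
  rw [TCL, sum_eq_sum_card_filter_le T chordLen hle, ← add_sum_Ioc_eq_sum_Icc (by omega)]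
  gcongr with l hl
  · exact hcard ▸ card_filter_le _ _
  · exact card_filter_le_chordLen_le (mem_Ioc.mp hl).1 hcross

/-- For `n ≥ 5`, every triangulation `T` of the `n`-gon satisfies
`4·TCL(T) ≤ n² - 9` if `n` is odd, and `4·TCL(T) ≤ n² - 8` if `n` is even. -/
theorem max_TCL_upper_bound (n : ℕ) (hn : 5 ≤ n) (T : Finset (Sym2 (ZMod n)))
    (hT : IsTriangulation n T) :
    (Odd n → 4 * TCL n T ≤ n ^ 2 - 9) ∧ (Even n → 4 * TCL n T ≤ n ^ 2 - 8) := by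
  have hTCL := TCL_le (by omega) hT
  have hsum := sum_Ioc_one_sub_two_mul n (h := n / 2) (by omega) (by omega)
  constructor
  · rintro ⟨h, rfl⟩
    have hh : (2 * h + 1) / 2 = h := by omega
    rw [hh] at hTCL hsum
    have : (2 * h + 1) ^ 2 = 4 * (h * h) + 4 * h + 1 := by ring
    have : h * (2 * h + 1) = 2 * (h * h) + h := by ring
    omega
  · rintro ⟨h, rfl⟩
    have hh : (h + h) / 2 = h := by omega
    rw [hh] at hTCL hsum
    have : (h + h) ^ 2 = 4 * (h * h) := by ring
    have : h * (h + h) = 2 * (h * h) := by ring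
    omega
end

section
/- Let n ≥ 4, let T be a triangulation of the n-gon, and let e be any boundary edge. Then m_T(e) ≤ n − 3; equivalently, the layer number n_T(e) = m_T(e)/2 is at most (n−3)/2. -/
open scoped Classical

section Helpers

variable {n : ℕ} [NeZero n]

lemma chordLen_mk (a b : ZMod n) : chordLen s(a, b) = min (b - a).val (a - b).val := rfl

lemma val_sub_add_val_sub (a b : ZMod n) (h : a ≠ b) : (b - a).val + (a - b).val = n := by
  have h1 : b - a ≠ 0 := by intro h0; apply h; linear_combination -h0
  have h2 := ZMod.neg_val (b - a)
  rw [show a - b = -(b - a) by ring]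
  have := ZMod.val_lt (b - a)
  have := (ZMod.val_eq_zero (b - a)).not.2 h1
  simp only [h1, if_false] at h2
  omega

lemma natCast_val_sub (a b : ZMod n) : (((b - a).val : ℕ) : ZMod n) = b - a := by
  rw [ZMod.natCast_val, ZMod.cast_id]

lemma mod_eq_sub_of {x m : ℕ} (h1 : m ≤ x) (h2 : x < 2 * m) : x % m = x - m := by
  rw [Nat.mod_eq_sub_mod h1]
  exact Nat.mod_eq_of_lt (by omega)

lemma layers_rep {p : Sym2 (ZMod n)} {i : ZMod n} (hp : LayersEdge p i) :
    ∃ a : ZMod n, p = s(a, a + ((chordLen p : ℕ) : ZMod n)) ∧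
      2 * chordLen p < n ∧ (i - a).val < chordLen p := by
  obtain ⟨a, b, rfl, hlt, hi⟩ := hp
  have hab : a ≠ b := by
    intro h; subst h; simp at hlt
  have hsum := val_sub_add_val_sub a b hab
  have hcl : chordLen s(a, b) = (b - a).val := by
    rw [chordLen_mk]; omega
  refine ⟨a, ?_, by omega, by omega⟩
  rw [hcl, natCast_val_sub]
  congr 1
  ring

lemma crosses_of_layer {a c : ZMod n} {k : ℕ} (hk2 : 2 * k < n) (hk0 : 0 < k)
    (hac : a ≠ c) (ht : (c - a).val < k) :
    Crosses s(a, a + (k : ZMod n)) s(c, c + (k : ZMod n)) := by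
  have hkn : k < n := by omega
  have hkv : ((k : ZMod n)).val = k := ZMod.val_cast_of_lt hkn
  set t := (c - a).val with htdef
  have htn : t < n := ZMod.val_lt _
  have ht0 : 0 < t := by
    rcases Nat.eq_zero_or_pos t with h | h
    · exact absurd (by linear_combination ((ZMod.val_eq_zero (c - a)).1 h)) hac.symm
    · exact h
  have hba : (a + (k : ZMod n)) - a = (k : ZMod n) := by ring
  have hda : (c + (k : ZMod n)) - a = (c - a) + (k : ZMod n) := by ring
  have hdav : ((c - a) + (k : ZMod n)).val = t + k := by
    rw [ZMod.val_add, hkv]; exact Nat.mod_eq_of_lt (by omega)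
  refine ⟨a, a + k, c, c + k, rfl, rfl, ?_, hac, ?_, ?_, ?_, ?_, ?_⟩
  · intro h
    have : ((k : ZMod n)).val = 0 := by
      rw [show (k : ZMod n) = (a + k) - a by ring, ← h]; simp
    omega
  · intro h
    have : (c - a) = -(k : ZMod n) := by rw [h]; ring
    have hv : (-(k : ZMod n)).val = n - k := by
      rw [ZMod.neg_val]
      have : (k : ZMod n) ≠ 0 := by
        intro h0
        have := ZMod.val_cast_of_lt hkn
        rw [h0] at this; simp at this; omega
      simp [this, hkv]
    rw [this, hv] at htdef
    omega
  · intro h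
    have : (c - a) = (k : ZMod n) := by rw [← h]; ring
    rw [this, hkv] at htdef; omega
  · intro h
    exact hac (by linear_combination h)
  · intro h
    have h0 : (k : ZMod n) = 0 := by linear_combination -h
    rw [h0] at hkv; simp at hkv; omega
  · left
    constructor
    · rw [InArc, hba, hkv]
      exact ⟨ht0, ht⟩
    · rw [InArc, hba, hkv, hda, hdav]
      omega

lemma diam_rep {p : Sym2 (ZMod n)} (hp : IsDiameter p) :
    ∃ a : ZMod n, p = s(a, a + ((n / 2 : ℕ) : ZMod n)) ∧ (n % 2 = 0) := by
  induction p using Sym2.inductionOn with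
  | hf a b =>
    rw [IsDiameter, chordLen_mk] at hp
    have hn0 : 0 < n := Nat.pos_of_ne_zero (NeZero.ne n)
    have hab : a ≠ b := by
      intro h; subst h; simp at hp; omega
    have hsum := val_sub_add_val_sub a b hab
    have hba : (b - a).val = n / 2 ∧ n % 2 = 0 := by omega
    refine ⟨a, ?_, hba.2⟩
    have : (((n / 2 : ℕ)) : ZMod n) = b - a := by rw [← hba.1, natCast_val_sub]
    rw [this]
    congr 1
    ring

lemma crosses_of_diams {p q : Sym2 (ZMod n)} (hp : IsDiameter p) (hq : IsDiameter q)
    (hpq : p ≠ q) : Crosses p q := by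
  obtain ⟨a, rfl, hev⟩ := diam_rep hp
  obtain ⟨c, rfl, -⟩ := diam_rep hq
  set h := n / 2 with hdef
  have hn0 : 0 < n := Nat.pos_of_ne_zero (NeZero.ne n)
  have hhn : 2 * h = n := by omega
  have hh0 : 0 < h := by omega
  have hhv : ((h : ZMod n)).val = h := ZMod.val_cast_of_lt (by omega)
  have hh2 : ((h : ZMod n)) + ((h : ZMod n)) = 0 := by
    rw [← Nat.cast_add, show h + h = n by omega, ZMod.natCast_self]
  have hac : a ≠ c := by
    rintro rfl; exact hpq rfl
  have hcb : c ≠ a + (h : ZMod n) := by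
    intro hc
    apply hpq
    rw [hc, show a + (h:ZMod n) + (h:ZMod n) = a by rw [add_assoc, hh2, add_zero]]
    exact Sym2.eq_swap.symm
  set t := (c - a).val with htdef
  have htn : t < n := ZMod.val_lt _
  have ht0 : 0 < t := by
    rcases Nat.eq_zero_or_pos t with h0 | h0
    · exact absurd (by linear_combination ((ZMod.val_eq_zero (c - a)).1 h0)) hac.symm
    · exact h0
  have hth : t ≠ h := by
    intro hth
    apply hcb
    have : c - a = (h : ZMod n) := by
      rw [← hhv] at hth
      have := natCast_val_sub a c
      rw [← htdef, hth, ZMod.natCast_val, ZMod.cast_id] at this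
      exact this.symm
    linear_combination this
  have hba : (a + (h : ZMod n)) - a = (h : ZMod n) := by ring
  have hda : (c + (h : ZMod n)) - a = (c - a) + (h : ZMod n) := by ring
  have hdav : ((c - a) + (h : ZMod n)).val = (t + h) % n := by
    rw [ZMod.val_add, hhv]
  refine ⟨a, a + h, c, c + h, rfl, rfl, ?_, hac, ?_, hcb.symm, ?_, ?_, ?_⟩
  · intro hh
    have : ((h : ZMod n)).val = 0 := by
      rw [show (h : ZMod n) = (a + h) - a by ring, ← hh]; simp
    omega
  · intro hh
    have h0 : (c - a) + (h : ZMod n) = 0 := by linear_combination -hh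
    have h1 := congrArg ZMod.val h0
    rw [hdav] at h1
    simp only [ZMod.val_zero] at h1
    rcases Nat.lt_or_ge (t + h) n with hc | hc
    · rw [Nat.mod_eq_of_lt hc] at h1; omega
    · rw [mod_eq_sub_of hc (by omega)] at h1; omega
  · intro hh
    exact hac (by linear_combination hh)
  · intro hh
    have h0 : ((h : ZMod n)) = 0 := by linear_combination -hh
    rw [h0] at hhv; simp at hhv; omega
  · rcases Nat.lt_or_ge t h with hlt | hge
    · left
      constructor
      · rw [InArc, hba, hhv]; exact ⟨ht0, hlt⟩
      · rw [InArc, hba, hhv, hda, hdav, Nat.mod_eq_of_lt (by omega)]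
        omega
    · right
      constructor
      · rw [InArc, hba, hhv, hda, hdav, mod_eq_sub_of (by omega) (by omega)]
        omega
      · rw [InArc, hba, hhv]
        omega

end Helpers

theorem layer_number_le' (n : ℕ) (hn : 4 ≤ n) (T : Finset (Sym2 (ZMod n)))
    (hT : (∀ p ∈ T, 2 ≤ chordLen p) ∧
      ∀ p ∈ T, ∀ q ∈ T, p ≠ q → ¬ Crosses p q) (i : ZMod n) :
    2 * (T.filter (fun p => LayersEdge p i ∧ ¬ IsDiameter p)).card +
      (T.filter (fun p => IsDiameter p)).card ≤ n - 3 := by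
  haveI : NeZero n := ⟨by omega⟩
  obtain ⟨hlen, hcross⟩ := hT
  set S := T.filter (fun p => LayersEdge p i ∧ ¬ IsDiameter p) with hSdef
  set Ds := T.filter (fun p => IsDiameter p) with hDdef
  have hS : S.card ≤ (n - 1) / 2 - 1 := by
    have hinj : Set.InjOn chordLen (S : Set (Sym2 (ZMod n))) := by
      intro p hp q hq hpq_len
      by_contra hne
      rw [Finset.mem_coe, hSdef, Finset.mem_filter] at hp hq
      obtain ⟨hpT, hpL, -⟩ := hp
      obtain ⟨hqT, hqL, -⟩ := hq
      obtain ⟨a, hpa, hp2, hpi⟩ := layers_rep hpL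
      obtain ⟨c, hqc, hq2, hqi⟩ := layers_rep hqL
      rw [← hpq_len] at hqc hq2 hqi
      set k := chordLen p with hkdef
      have hk0 : 0 < k := by have := hlen p hpT; omega
      have hac : a ≠ c := by
        rintro rfl; exact hne (by rw [hpa, hqc])
      have key : (c - a).val < k ∨ (a - c).val < k := by
        by_contra hcon
        push_neg at hcon
        have h1 := val_sub_add_val_sub a c hac
        have h2 : (i - a).val = ((i - c).val + (c - a).val) % n := by
          rw [show i - a = (i - c) + (c - a) by ring, ZMod.val_add]
        have h3 := ZMod.val_lt (i - c)
        have h4 := ZMod.val_lt (c - a)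
        rcases Nat.lt_or_ge ((i - c).val + (c - a).val) n with hc | hc
        · rw [Nat.mod_eq_of_lt hc] at h2; omega
        · rw [mod_eq_sub_of hc (by omega)] at h2; omega
      rcases key with hlt | hlt
      · exact hcross p hpT q hqT hne
          (by rw [hpa, hqc]; exact crosses_of_layer hp2 hk0 hac hlt)
      · exact hcross q hqT p hpT (Ne.symm hne)
          (by rw [hpa, hqc]; exact crosses_of_layer hp2 hk0 hac.symm hlt)
    calc S.card = (S.image chordLen).card := (Finset.card_image_of_injOn hinj).symm
      _ ≤ (Finset.Icc 2 ((n - 1) / 2)).card := by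
          apply Finset.card_le_card
          intro k hk
          rw [Finset.mem_image] at hk
          obtain ⟨p, hp, rfl⟩ := hk
          rw [hSdef, Finset.mem_filter] at hp
          obtain ⟨hpT, hpL, -⟩ := hp
          obtain ⟨a, -, hp2, -⟩ := layers_rep hpL
          have := hlen p hpT
          rw [Finset.mem_Icc]
          omega
      _ = (n - 1) / 2 - 1 := by rw [Nat.card_Icc]; omega
  have hD1 : Ds.card ≤ 1 := by
    rw [Finset.card_le_one]
    intro p hp q hq
    rw [hDdef, Finset.mem_filter] at hp hq
    by_contra hne
    exact hcross p hp.1 q hq.1 hne (crosses_of_diams hp.2 hq.2 hne)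
  have hD0 : n % 2 = 1 → Ds.card = 0 := by
    intro hodd
    rw [Finset.card_eq_zero, hDdef, Finset.filter_eq_empty_iff]
    intro p _ hd
    rw [IsDiameter] at hd
    omega
  rcases Nat.mod_two_eq_zero_or_one n with hpar | hpar
  · omega
  · have := hD0 hpar; omega

/-- For `n ≥ 4`, a triangulation `T` of the `n`-gon, and any boundary edge
`{i, i+1}`, the doubled layer number satisfies `m_T(e) ≤ n - 3`. -/
theorem layer_number_le (n : ℕ) (hn : 4 ≤ n) (T : Finset (Sym2 (ZMod n)))
    (hT : IsTriangulation n T) (i : ZMod n) :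
    mT n T i ≤ n - 3 := by
  exact layer_number_le' n hn T ⟨hT.2.1, hT.2.2⟩ i
end
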